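/- Let $G$ be bounded with support in $[A,B]$, $\int G=1$, and $\int u^jG(u)\,du = 0$ for $j=1,\dots,k$. Let $J$ be $k$-times differentiable on $[0,T]$ with $J^{(k)}$ Lipschitz with constant $L_1$. Fix $t$ and $\varphi>0$ with $[t+\varphi A,t+\varphi B]\subset[0,T]$. Then $\big|\int G(u)\big(J(t+\varphi u)-J(t)\big)\,du\big|^2 \le \frac{L_1^2(B-A)}{(k!)^2}\,\varphi^{2(k+1)}\int G^2(u)u^{2(k+1)}\,du$. -/

import Mathlib

/-!
Taylor's formula of order `k` at `t` leaves a remainder bounded by `L₁ |x - t|^(k+1) / (k+1)!`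
when `J⁽ᵏ⁾` is `L₁`-Lipschitz: by induction on `k`, the remainder of `J` has derivative the
remainder of `J'`, and integrating the bound `C |y - t|^k` for the latter gains the factor
`1 / (k + 1)`. The vanishing moments of `G` annihilate the Taylor polynomial, so the bias is
`∫ G · (remainder)` over `[A, B]`, and Cauchy–Schwarz on `[A, B]` gives the factor `B - A`.
-/

open Set MeasureTheory

open scoped NNReal Interval

section

open scoped Nat

variable {E : Type*} [NormedAddCommGroup E] [NormedSpace ℝ E]

@[fun_prop]
theorem continuous_taylorWithinEval (f : ℝ → E) (n : ℕ) (s : Set ℝ) (x₀ : ℝ) :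
    Continuous (taylorWithinEval f n s x₀) := by
  simp_rw [funext (taylor_within_apply f n s x₀)]
  fun_prop

theorem ContinuousOn.of_hasDerivAt_iteratedDeriv {f : ℝ → E} {s : Set ℝ} {n : ℕ} {L : ℝ≥0}
    (hf : ∀ x ∈ s, ∀ i < n, HasDerivAt (iteratedDeriv i f) (iteratedDeriv (i + 1) f x) x)
    (hlip : LipschitzOnWith L (iteratedDeriv n f) s) : ContinuousOn f s := by
  rcases n with _ | n
  · simpa only [iteratedDeriv_zero] using hlip.continuousOn
  · intro x hx
    simpa only [iteratedDeriv_zero] using (hf x hx 0 n.succ_pos).continuousAt.continuousWithinAt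

theorem norm_le_of_hasDerivAt_of_norm_deriv_le_pow [CompleteSpace E] {g g' : ℝ → E}
    {s : Set ℝ} [s.OrdConnected] {x₀ x C : ℝ} {n : ℕ}
    (hg : ∀ y ∈ s, HasDerivAt g (g' y) y) (hg'_cont : ContinuousOn g' s)
    (hg'_le : ∀ y ∈ s, ‖g' y‖ ≤ C * |y - x₀| ^ n) (hx₀ : x₀ ∈ s) (hgx₀ : g x₀ = 0)
    (hx : x ∈ s) : ‖g x‖ ≤ C * |x - x₀| ^ (n + 1) / (n + 1) := by
  have hsub : uIcc x₀ x ⊆ s := Set.OrdConnected.uIcc_subset ‹_› hx₀ hx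
  have hftc : ∫ y in x₀..x, g' y = g x := by
    rw [intervalIntegral.integral_eq_sub_of_hasDerivAt (fun y hy => hg y (hsub hy))
      ((hg'_cont.mono hsub).intervalIntegrable), hgx₀, sub_zero]
  have hbound : IntegrableOn (fun y => C * |y - x₀| ^ n) (Ι x₀ x) :=
    (Continuous.integrableOn_uIoc (by fun_prop))
  calc ‖g x‖ = ‖∫ y in Ι x₀ x, g' y‖ := by
        rw [← hftc, intervalIntegral.norm_integral_eq_norm_integral_uIoc]
    _ ≤ ∫ y in Ι x₀ x, C * |y - x₀| ^ n :=
        norm_integral_le_of_norm_le hbound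
          ((ae_restrict_iff' measurableSet_uIoc).2 (.of_forall fun y hy =>
            hg'_le y (hsub (uIoc_subset_uIcc hy))))
    _ = C * |x - x₀| ^ (n + 1) / (n + 1) := by
        rw [integral_const_mul, integral_pow_abs_sub_uIoc, mul_div_assoc]

theorem norm_sub_taylorWithinEval_le_of_lipschitzOnWith [CompleteSpace E] {f : ℝ → E}
    {s : Set ℝ} [s.OrdConnected] {n : ℕ} {L : ℝ≥0}
    (hf : ∀ x ∈ s, ∀ i < n, HasDerivAt (iteratedDeriv i f) (iteratedDeriv (i + 1) f x) x)
    (hlip : LipschitzOnWith L (iteratedDeriv n f) s) {x₀ x : ℝ} (hx₀ : x₀ ∈ s) (hx : x ∈ s) :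
    ‖f x - taylorWithinEval f n univ x₀ x‖ ≤ L * |x - x₀| ^ (n + 1) / (n + 1)! := by
  induction n generalizing f x with
  | zero =>
    simpa [iteratedDeriv_zero, dist_eq_norm, Real.dist_eq] using hlip.dist_le_mul x hx x₀ hx₀
  | succ n ih =>
    have hderiv : ∀ i, iteratedDeriv i (deriv f) = iteratedDeriv (i + 1) f := fun i =>
      (iteratedDeriv_succ' ..).symm
    have hf' : ∀ x ∈ s, ∀ i < n,
        HasDerivAt (iteratedDeriv i (deriv f)) (iteratedDeriv (i + 1) (deriv f) x) x := by
      simpa only [hderiv] using fun x hx i hi => hf x hx (i + 1) (by omega)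
    have hlip' : LipschitzOnWith L (iteratedDeriv n (deriv f)) s := by rwa [hderiv]
    have hg : ∀ y ∈ s, HasDerivAt (fun y => f y - taylorWithinEval f (n + 1) univ x₀ y)
        (deriv f y - taylorWithinEval (deriv f) n univ x₀ y) y := fun y hy => by
      have := hasDerivAt_taylorWithinEval_succ (x₀ := x₀) (x := y) (s := univ) f n
      rw [derivWithin_univ] at this
      exact (by simpa using hf y hy 0 n.succ_pos : HasDerivAt f (deriv f y) y).sub this
    have hcont : ContinuousOn (fun y => deriv f y - taylorWithinEval (deriv f) n univ x₀ y) s :=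
      (ContinuousOn.of_hasDerivAt_iteratedDeriv hf' hlip').sub
        (continuous_taylorWithinEval _ _ _ _).continuousOn
    have hle := norm_le_of_hasDerivAt_of_norm_deriv_le_pow (C := L / (n + 1)!) (n := n + 1)
      hg hcont (fun y hy => (ih hf' hlip' hy).trans_eq (by ring)) hx₀ (by simp) hx
    refine hle.trans_eq ?_
    rw [Nat.factorial_succ (n + 1)]
    push_cast
    field_simp

theorem sq_integral_le_measureReal_univ_mul_integral_sq {α : Type*} [MeasurableSpace α]
    {μ : Measure α} [IsFiniteMeasure μ] {f : α → ℝ} (hf : Integrable f μ)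
    (hf_sq : Integrable (fun x => f x ^ 2) μ) :
    (∫ x, f x ∂μ) ^ 2 ≤ μ.real univ * ∫ x, f x ^ 2 ∂μ := by
  rcases eq_zero_or_neZero μ with rfl | hμ
  · simp
  have hjensen := (Even.convexOn_pow even_two).map_average_le (continuous_pow 2).continuousOn
    isClosed_univ (.of_forall fun _ => mem_univ _) hf hf_sq
  have hm : 0 < μ.real univ := measureReal_univ_pos
  rw [average_eq, average_eq, smul_eq_mul, smul_eq_mul, mul_pow, inv_pow] at hjensen
  have := mul_le_mul_of_nonneg_left hjensen (sq_nonneg (μ.real univ))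
  field_simp at this
  linarith

theorem integrable_mul_of_continuousOn_Icc {G h : ℝ → ℝ} {a b : ℝ} (hG_meas : Measurable G)
    (hG_bdd : ∃ M, ∀ u, |G u| ≤ M) (hG_supp : ∀ u, u ∉ Icc a b → G u = 0)
    (hh : ContinuousOn h (Icc a b)) : Integrable (fun u => G u * h u) := by
  obtain ⟨M, hM⟩ := hG_bdd
  refine IntegrableOn.integrable_of_forall_notMem_eq_zero (s := Icc a b) ?_
    fun u hu => by simp [hG_supp u hu]
  exact hh.integrableOn_Icc.bdd_mul hG_meas.aestronglyMeasurable (.of_forall hM)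

theorem integral_mul_sum_pow_succ_eq_zero {G : ℝ → ℝ} {k : ℕ}
    (hint : ∀ j, Integrable (fun u => u ^ j * G u))
    (hmom : ∀ j : ℕ, 1 ≤ j → j ≤ k → ∫ u, u ^ j * G u = 0) (a : ℕ → ℝ) :
    ∫ u, G u * ∑ i ∈ Finset.range k, a i * u ^ (i + 1) = 0 := by
  have hexpand : ∀ u, G u * ∑ i ∈ Finset.range k, a i * u ^ (i + 1) =
      ∑ i ∈ Finset.range k, a i * (u ^ (i + 1) * G u) := fun u => by
    rw [Finset.mul_sum]
    exact Finset.sum_congr rfl fun _ _ => by ring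
  simp_rw [hexpand]
  rw [integral_finsetSum _ fun i _ => (hint _).const_mul _]
  refine Finset.sum_eq_zero fun i hi => ?_
  rw [integral_const_mul, hmom _ le_add_self (Finset.mem_range.1 hi), mul_zero]

theorem taylorWithinEval_univ_sub_self (f : ℝ → ℝ) (n : ℕ) (x₀ x : ℝ) :
    taylorWithinEval f n univ x₀ x - f x₀ =
      ∑ i ∈ Finset.range n, iteratedDeriv (i + 1) f x₀ / (i + 1)! * (x - x₀) ^ (i + 1) := by
  rw [taylor_within_apply, Finset.sum_range_succ']
  simp only [iteratedDerivWithin_univ, iteratedDeriv_zero, smul_eq_mul, Nat.factorial_zero,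
    Nat.cast_one, inv_one, pow_zero, mul_one, one_mul, add_sub_cancel_right]
  exact Finset.sum_congr rfl fun i _ => by ring

theorem integral_mul_sub_eq_setIntegral_mul_sub_taylorWithinEval {G f : ℝ → ℝ} {A B t c : ℝ}
    {k : ℕ} (hG_meas : Measurable G) (hG_bdd : ∃ M, ∀ u, |G u| ≤ M)
    (hG_supp : ∀ u, u ∉ Icc A B → G u = 0)
    (hG_mom : ∀ j : ℕ, 1 ≤ j → j ≤ k → ∫ u, u ^ j * G u = 0)
    (hf : ContinuousOn (fun u => f (t + c * u)) (Icc A B)) :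
    ∫ u, G u * (f (t + c * u) - f t) =
      ∫ u in Icc A B, G u * (f (t + c * u) - taylorWithinEval f k univ t (t + c * u)) := by
  have hsplit : ∀ u, G u * (f (t + c * u) - f t) =
      G u * (f (t + c * u) - taylorWithinEval f k univ t (t + c * u)) +
        G u * ∑ i ∈ Finset.range k,
          iteratedDeriv (i + 1) f t / (i + 1)! * c ^ (i + 1) * u ^ (i + 1) := fun u => by
    have h := taylorWithinEval_univ_sub_self f k t (t + c * u)
    simp only [add_sub_cancel_left, mul_pow, ← mul_assoc] at h
    rw [← h]
    ring
  have hremainder := integrable_mul_of_continuousOn_Icc hG_meas hG_bdd hG_supp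
    (h := fun u => f (t + c * u) - taylorWithinEval f k univ t (t + c * u)) (hf.sub (by fun_prop))
  have hpoly := integrable_mul_of_continuousOn_Icc hG_meas hG_bdd hG_supp
    (h := fun u => ∑ i ∈ Finset.range k,
      iteratedDeriv (i + 1) f t / (i + 1)! * c ^ (i + 1) * u ^ (i + 1)) (by fun_prop)
  have hmoment : ∀ j, Integrable (fun u => u ^ j * G u) := fun j => by
    simpa only [mul_comm] using
      integrable_mul_of_continuousOn_Icc hG_meas hG_bdd hG_supp (h := (· ^ j)) (by fun_prop)
  simp_rw [hsplit]
  rw [integral_add hremainder hpoly, integral_mul_sum_pow_succ_eq_zero hmoment hG_mom, add_zero,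
    setIntegral_eq_integral_of_forall_compl_eq_zero (fun u hu => by simp [hG_supp u hu])]

theorem sq_setIntegral_mul_le_of_abs_le_mul_pow {G r : ℝ → ℝ} {A B C : ℝ} {m : ℕ}
    (hAB : A ≤ B) (hG_meas : Measurable G) (hG_bdd : ∃ M, ∀ u, |G u| ≤ M)
    (hG_supp : ∀ u, u ∉ Icc A B → G u = 0) (hr_cont : ContinuousOn r (Icc A B))
    (hr_le : ∀ u ∈ Icc A B, |r u| ≤ C * |u| ^ m) :
    (∫ u in Icc A B, G u * r u) ^ 2 ≤ C ^ 2 * (B - A) * ∫ u, G u ^ 2 * u ^ (2 * m) := by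
  obtain ⟨M, hM⟩ := hG_bdd
  have hG_sq_bdd : ∃ M, ∀ u, |G u ^ 2| ≤ M := ⟨M ^ 2, fun u => by
    rw [abs_pow]; exact pow_le_pow_left₀ (abs_nonneg _) (hM u) 2⟩
  have hG_sq_supp : ∀ u, u ∉ Icc A B → G u ^ 2 = 0 := fun u hu => by simp [hG_supp u hu]
  have hGr : Integrable (fun u => G u * r u) :=
    integrable_mul_of_continuousOn_Icc hG_meas ⟨M, hM⟩ hG_supp hr_cont
  have hGr_sq : Integrable (fun u => (G u * r u) ^ 2) := by
    simpa only [mul_pow] using integrable_mul_of_continuousOn_Icc (h := fun u => r u ^ 2)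
      (hG_meas.pow_const 2) hG_sq_bdd hG_sq_supp (hr_cont.pow 2)
  have hG_sq_moment : Integrable (fun u => G u ^ 2 * u ^ (2 * m)) :=
    integrable_mul_of_continuousOn_Icc (hG_meas.pow_const 2) hG_sq_bdd hG_sq_supp (by fun_prop)
  have hpointwise : ∀ u ∈ Icc A B, (G u * r u) ^ 2 ≤ C ^ 2 * (G u ^ 2 * u ^ (2 * m)) :=
    fun u hu => calc
      (G u * r u) ^ 2 = G u ^ 2 * |r u| ^ 2 := by rw [mul_pow, sq_abs]
      _ ≤ G u ^ 2 * (C * |u| ^ m) ^ 2 := by gcongr; exact hr_le u hu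
      _ = C ^ 2 * (G u ^ 2 * u ^ (2 * m)) := by rw [mul_pow C, ← abs_pow, sq_abs]; ring
  calc (∫ u in Icc A B, G u * r u) ^ 2
      ≤ (B - A) * ∫ u in Icc A B, (G u * r u) ^ 2 := by
        simpa [hAB] using sq_integral_le_measureReal_univ_mul_integral_sq
          (hGr.integrableOn (s := Icc A B)) hGr_sq.integrableOn
    _ ≤ (B - A) * ∫ u in Icc A B, C ^ 2 * (G u ^ 2 * u ^ (2 * m)) := by
        refine mul_le_mul_of_nonneg_left ?_ (sub_nonneg.2 hAB)
        exact setIntegral_mono_on hGr_sq.integrableOn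
          (hG_sq_moment.integrableOn.const_mul _) measurableSet_Icc hpointwise
    _ = C ^ 2 * (B - A) * ∫ u, G u ^ 2 * u ^ (2 * m) := by
        rw [integral_const_mul, setIntegral_eq_integral_of_forall_compl_eq_zero
          (fun u hu => by simp [hG_supp u hu])]
        ring

end

theorem kernel_bias_squared_general (A B T L1 t φ : ℝ) (hA : A < 0) (hB : 0 < B) (hL1 : 0 < L1)
    (hφ : 0 < φ) (k : ℕ)
    (hsub : Set.Icc (t + φ * A) (t + φ * B) ⊆ Set.Icc 0 T)
    (G : ℝ → ℝ) (hG_meas : Measurable G) (hG_bdd : ∃ M, ∀ u, |G u| ≤ M)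
    (hG_supp : ∀ u, u ∉ Set.Icc A B → G u = 0)
    (hG_mom : ∀ j : ℕ, 1 ≤ j → j ≤ k → ∫ u, u ^ j * G u = 0)
    (J : ℝ → ℝ)
    (hJ_diff : ∀ s ∈ Set.Icc (0:ℝ) T, ∀ i < k, HasDerivAt (iteratedDeriv i J) (iteratedDeriv (i + 1) J s) s)
    (hJ_lip : LipschitzOnWith (Real.toNNReal L1) (iteratedDeriv k J) (Set.Icc 0 T)) :
    |∫ u, G u * (J (t + φ * u) - J t)| ^ 2 ≤
      L1 ^ 2 * (B - A) / (Nat.factorial k) ^ 2 * φ ^ (2 * (k + 1)) *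
        ∫ u, G u ^ 2 * u ^ (2 * (k + 1)) := by
  have hmem : MapsTo (fun u => t + φ * u) (Icc A B) (Icc 0 T) := fun u hu =>
    hsub ⟨by nlinarith [hu.1], by nlinarith [hu.2]⟩
  have ht : t ∈ Icc 0 T := by simpa using hmem ⟨hA.le, hB.le⟩
  have hJ_cont := (ContinuousOn.of_hasDerivAt_iteratedDeriv hJ_diff hJ_lip).comp (by fun_prop) hmem
  have hremainder : ∀ u ∈ Icc A B, |J (t + φ * u) - taylorWithinEval J k univ t (t + φ * u)| ≤
      L1 * φ ^ (k + 1) / k.factorial * |u| ^ (k + 1) := fun u hu => by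
    have h := norm_sub_taylorWithinEval_le_of_lipschitzOnWith hJ_diff hJ_lip ht (hmem hu)
    rw [Real.norm_eq_abs, Real.coe_toNNReal _ hL1.le, add_sub_cancel_left, abs_mul,
      abs_of_pos hφ, mul_pow, ← mul_assoc, mul_div_right_comm] at h
    refine h.trans ?_
    gcongr
    exact k.le_succ
  rw [integral_mul_sub_eq_setIntegral_mul_sub_taylorWithinEval hG_meas hG_bdd hG_supp hG_mom
    hJ_cont, sq_abs]
  refine (sq_setIntegral_mul_le_of_abs_le_mul_pow (hA.trans hB).le hG_meas hG_bdd hG_supp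
    (hJ_cont.sub (by fun_prop)) hremainder).trans_eq ?_
  ring

theorem kernel_bias_squared (A B T L1 t φ : ℝ) (hA : A < 0) (hB : 0 < B) (hL1 : 0 < L1)
    (hφ : 0 < φ) (ht : t ∈ Set.Ioo (0:ℝ) T) (k : ℕ) (hk : 1 ≤ k)
    (hsub : Set.Icc (t + φ * A) (t + φ * B) ⊆ Set.Icc 0 T)
    (G : ℝ → ℝ) (hG_meas : Measurable G) (hG_bdd : ∃ M, ∀ u, |G u| ≤ M)
    (hG_supp : ∀ u, u ∉ Set.Icc A B → G u = 0)
    (hG_int : ∫ u, G u = 1)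
    (hG_mom : ∀ j : ℕ, 1 ≤ j → j ≤ k → ∫ u, u ^ j * G u = 0)
    (J : ℝ → ℝ)
    (hJ_diff : ∀ s ∈ Set.Icc (0:ℝ) T, ∀ i < k, HasDerivAt (iteratedDeriv i J) (iteratedDeriv (i + 1) J s) s)
    (hJ_lip : LipschitzOnWith (Real.toNNReal L1) (iteratedDeriv k J) (Set.Icc 0 T)) :
    |∫ u, G u * (J (t + φ * u) - J t)| ^ 2 ≤
      L1 ^ 2 * (B - A) / (Nat.factorial k) ^ 2 * φ ^ (2 * (k + 1)) *
        ∫ u, G u ^ 2 * u ^ (2 * (k + 1)) :=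
  kernel_bias_squared_general A B T L1 t φ hA hB hL1 hφ k hsub G hG_meas hG_bdd hG_supp hG_mom J
    hJ_diff hJ_lip
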